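/- arXiv:2204.12814 — 2 statements merged into one kernel-verified Lean document; each statement's English description precedes it below -/
import Mathlib

section
/- In a finite MDP, if the initial distribution d0 is not sure winning for eventually synchronizing in T (i.e., there is no k ≥ 0 with Supp(d0) ⊆ Pre^k(T)), then for every strategy σ and every i ≥ 0, the probability mass in T at step i satisfies M^σ_i(T) ≤ 1 − α0·α^i, where α is the smallest positive transition probability and α0 the smallest positive probability in d0. -/
open scoped BigOperators
open Classical Filter

/-- A finite Markov decision process with real transition probabilities. -/
structure MDP (Q A : Type) [Fintype Q] [Fintype A] where
  δ : Q → A → Q → ℝ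
  δ_nonneg : ∀ q a q', 0 ≤ δ q a q'
  δ_sum : ∀ q a, ∑ q', δ q a q' = 1

namespace MDP

variable {Q A : Type} [Fintype Q] [Fintype A]

/-- `d` is a probability distribution. -/
def IsDist (d : Q → ℝ) : Prop := (∀ q, 0 ≤ d q) ∧ ∑ q, d q = 1

/-- A (randomized, history-dependent) strategy maps a history (list of past
state-action pairs) and the current state to a distribution over actions. -/
def IsStrategy (σ : List (Q × A) → Q → A → ℝ) : Prop :=
  (∀ h q a, 0 ≤ σ h q a) ∧ ∀ h q, ∑ a, σ h q a = 1

/-- The probability of the finite path `qs` (with actions `as`) of length `i`,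
under strategy `σ` from initial distribution `d0`. -/
noncomputable def pathProb (M : MDP Q A) (σ : List (Q × A) → Q → A → ℝ)
    (d0 : Q → ℝ) (i : ℕ) (qs : Fin (i + 1) → Q) (as : Fin i → A) : ℝ :=
  d0 (qs 0) * ∏ j : Fin i,
    (σ (List.ofFn (fun k : Fin j.val =>
          (qs ⟨k.val, by have := k.isLt; have := j.isLt; omega⟩,
           as ⟨k.val, by have := k.isLt; have := j.isLt; omega⟩)))
        (qs j.castSucc) (as j))
      * M.δ (qs j.castSucc) (as j) (qs j.succ)

/-- The distribution over states after `i` steps (`M^σ_i`). -/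
noncomputable def stepDist (M : MDP Q A) (σ : List (Q × A) → Q → A → ℝ)
    (d0 : Q → ℝ) (i : ℕ) (q : Q) : ℝ :=
  ∑ qs : Fin (i + 1) → Q, ∑ as : Fin i → A,
    if qs (Fin.last i) = q then M.pathProb σ d0 i qs as else 0

/-- The probability mass that a (sub)distribution assigns to a set `T`. -/
noncomputable def mass (d : Q → ℝ) (T : Set Q) : ℝ := ∑ q, T.indicator d q

/-- The support of a (sub)distribution. -/
def supp {α : Type} (d : α → ℝ) : Set α := {q | 0 < d q}

/-- One-step sure predecessors of `Y`. -/
def Pre (M : MDP Q A) (Y : Set Q) : Set Q :=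
  {q | ∃ a, ∀ q', 0 < M.δ q a q' → q' ∈ Y}

/-- Probability of reaching `T` within `i` steps. -/
noncomputable def reachProb (M : MDP Q A) (σ : List (Q × A) → Q → A → ℝ)
    (d0 : Q → ℝ) (T : Set Q) (i : ℕ) : ℝ :=
  ∑ qs : Fin (i + 1) → Q, ∑ as : Fin i → A,
    if ∃ j, qs j ∈ T then M.pathProb σ d0 i qs as else 0

/-- `d0` is almost-sure winning for the reachability objective `◇T`:
some strategy reaches `T` with probability one. -/
def ASReach (M : MDP Q A) (d0 : Q → ℝ) (T : Set Q) : Prop :=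
  ∃ σ, IsStrategy σ ∧ (⨆ i : ℕ, M.reachProb σ d0 T i) = 1

/-- `d0` is limit-sure eventually synchronizing in `T`. -/
def LimitSureEventually (M : MDP Q A) (d0 : Q → ℝ) (T : Set Q) : Prop :=
  ∀ ε > (0 : ℝ), ∃ σ, IsStrategy σ ∧ ∃ i, 1 - ε ≤ mass (M.stepDist σ d0 i) T

/-- `d0` is almost-sure weakly synchronizing in `T`. -/
def ASWeakly (M : MDP Q A) (d0 : Q → ℝ) (T : Set Q) : Prop :=
  ∃ σ, IsStrategy σ ∧ ∀ ε > (0 : ℝ), {i : ℕ | 1 - ε ≤ mass (M.stepDist σ d0 i) T}.Infinite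

/-- `d0` is almost-sure strongly synchronizing in `T`. -/
def ASStrongly (M : MDP Q A) (d0 : Q → ℝ) (T : Set Q) : Prop :=
  ∃ σ, IsStrategy σ ∧ ∀ ε > (0 : ℝ), ∃ N, ∀ i ≥ N, 1 - ε ≤ mass (M.stepDist σ d0 i) T

/-- The uniform distribution on a set `S`. -/
noncomputable def uniformOn (S : Set Q) : Q → ℝ :=
  fun q => if q ∈ S then 1 / (S.ncard : ℝ) else 0

/-- The uniform strategy, playing all actions uniformly at random. -/
noncomputable def uniformStrategy (Q A : Type) [Fintype A] :
    List (Q × A) → Q → A → ℝ :=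
  fun _ _ _ => 1 / (Fintype.card A : ℝ)

/-- Action `a` is allowed in `q` w.r.t. `S` if all its successors stay in `S`. -/
def Allowed (M : MDP Q A) (S : Set Q) (q : Q) (a : A) : Prop :=
  ∀ q', 0 < M.δ q a q' → q' ∈ S

/-- Edge relation within `S` given the allowed actions. -/
def ECEdge (M : MDP Q A) (S : Set Q) (q q' : Q) : Prop :=
  q ∈ S ∧ q' ∈ S ∧ ∃ a, M.Allowed S q a ∧ 0 < M.δ q a q'

/-- `S` is an end-component: closed and strongly connected via allowed actions. -/
def IsEC (M : MDP Q A) (S : Set Q) : Prop :=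
  (∀ q ∈ S, ∃ a, M.Allowed S q a) ∧
  ∀ q ∈ S, ∀ q' ∈ S, Relation.ReflTransGen (M.ECEdge S) q q'

/-- The union of all end-components. -/
def ECUnion (M : MDP Q A) : Set Q := ⋃₀ {S | M.IsEC S}

/-- Positive always synchronizing in `T`. -/
def PosAlways (M : MDP Q A) (d0 : Q → ℝ) (T : Set Q) : Prop :=
  ∃ σ, IsStrategy σ ∧ ∀ i, 0 < mass (M.stepDist σ d0 i) T

/-- Positive eventually synchronizing in `T`. -/
def PosEvent (M : MDP Q A) (d0 : Q → ℝ) (T : Set Q) : Prop :=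
  ∃ σ, IsStrategy σ ∧ ∃ i, 0 < mass (M.stepDist σ d0 i) T

/-- Positive weakly synchronizing in `T`. -/
def PosWeakly (M : MDP Q A) (d0 : Q → ℝ) (T : Set Q) : Prop :=
  ∃ σ, IsStrategy σ ∧ ∀ N, ∃ i ≥ N, 0 < mass (M.stepDist σ d0 i) T

/-- Positive strongly synchronizing in `T`. -/
def PosStrongly (M : MDP Q A) (d0 : Q → ℝ) (T : Set Q) : Prop :=
  ∃ σ, IsStrategy σ ∧ ∃ N, ∀ i ≥ N, 0 < mass (M.stepDist σ d0 i) T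

/-- Bounded always synchronizing in `T`. -/
def BndAlways (M : MDP Q A) (d0 : Q → ℝ) (T : Set Q) : Prop :=
  ∃ σ, IsStrategy σ ∧ ∃ ε > (0 : ℝ), ∀ i, ε < mass (M.stepDist σ d0 i) T

/-- Bounded eventually synchronizing in `T`. -/
def BndEvent (M : MDP Q A) (d0 : Q → ℝ) (T : Set Q) : Prop :=
  ∃ σ, IsStrategy σ ∧ ∃ ε > (0 : ℝ), ∃ i, ε < mass (M.stepDist σ d0 i) T

/-- Bounded weakly synchronizing in `T`. -/
def BndWeakly (M : MDP Q A) (d0 : Q → ℝ) (T : Set Q) : Prop :=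
  ∃ σ, IsStrategy σ ∧ ∃ ε > (0 : ℝ), ∀ N, ∃ i ≥ N, ε < mass (M.stepDist σ d0 i) T

/-- Bounded strongly synchronizing in `T`. -/
def BndStrongly (M : MDP Q A) (d0 : Q → ℝ) (T : Set Q) : Prop :=
  ∃ σ, IsStrategy σ ∧ ∃ ε > (0 : ℝ), ∃ N, ∀ i ≥ N, ε < mass (M.stepDist σ d0 i) T

end MDP

/-!
A state is bad at horizon `k` if it lies outside `Pre^k(T)`. From a state that is bad at horizon
`k + 1`, every action moves with probability at least `α` to a state that is bad at horizon `k`.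
Conditioning on the first step (after which the strategy continues on the shifted history),
induction on `i` shows that after `i` steps the mass outside `T` is at least `α ^ i` times the
initial mass outside `Pre^i(T)`, and the latter is at least `α0` because `Supp(d0) ⊄ Pre^i(T)`.
-/

theorem Fintype.sum_fun_fin_succ {β M : Type*} [Fintype β] [AddCommMonoid M] {n : ℕ}
    (f : (Fin (n + 1) → β) → M) :
    ∑ x, f x = ∑ b, ∑ xs : Fin n → β, f (Fin.cons b xs) := by
  rw [← (Fin.consEquiv fun _ => β).sum_comp, Fintype.sum_prod_type]
  rfl

namespace MDP

variable {Q A : Type}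

def pathHistory {i : ℕ} (qs : Fin (i + 1) → Q) (as : Fin i → A) (j : Fin i) : List (Q × A) :=
  List.ofFn (fun k : Fin j.val =>
    (qs ⟨k.val, by have := k.isLt; have := j.isLt; omega⟩,
     as ⟨k.val, by have := k.isLt; have := j.isLt; omega⟩))

theorem pathHistory_zero {n : ℕ} (qs : Fin (n + 2) → Q) (as : Fin (n + 1) → A) :
    pathHistory qs as 0 = [] := rfl

theorem pathHistory_cons_succ {n : ℕ} (q0 : Q) (a0 : A) (qs : Fin (n + 1) → Q)
    (as : Fin n → A) (j : Fin n) :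
    pathHistory (Fin.cons q0 qs : Fin (n + 2) → Q) (Fin.cons a0 as) j.succ
      = (q0, a0) :: pathHistory qs as j := by
  simp only [pathHistory, Fin.val_succ, List.ofFn_succ]
  rfl

variable [Fintype A]

theorem IsStrategy.shift {σ : List (Q × A) → Q → A → ℝ} (hσ : IsStrategy σ) (q : Q) (a : A) :
    IsStrategy (fun h => σ ((q, a) :: h)) :=
  ⟨fun _ => hσ.1 _, fun _ => hσ.2 _⟩

variable [Fintype Q]

theorem pathProb_eq_prod_pathHistory (M : MDP Q A) (σ : List (Q × A) → Q → A → ℝ)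
    (d0 : Q → ℝ) (i : ℕ) (qs : Fin (i + 1) → Q) (as : Fin i → A) :
    M.pathProb σ d0 i qs as = d0 (qs 0) * ∏ j : Fin i,
      σ (pathHistory qs as j) (qs j.castSucc) (as j) * M.δ (qs j.castSucc) (as j) (qs j.succ) :=
  rfl

theorem pathProb_cons (M : MDP Q A) (σ : List (Q × A) → Q → A → ℝ) (d0 : Q → ℝ) {n : ℕ}
    (q0 : Q) (a0 : A) (qs : Fin (n + 1) → Q) (as : Fin n → A) :
    M.pathProb σ d0 (n + 1) (Fin.cons q0 qs) (Fin.cons a0 as)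
      = d0 q0 * σ [] q0 a0 * M.pathProb (fun h => σ ((q0, a0) :: h)) (M.δ q0 a0) n qs as := by
  simp only [pathProb_eq_prod_pathHistory, Fin.prod_univ_succ, pathHistory_zero,
    pathHistory_cons_succ, ← Fin.succ_castSucc, Fin.cons_succ, Fin.castSucc_zero, Fin.cons_zero]
  ring

theorem stepDist_zero (M : MDP Q A) (σ : List (Q × A) → Q → A → ℝ) (d0 : Q → ℝ) :
    M.stepDist σ d0 0 = d0 := by
  funext q
  simp [stepDist, pathProb, ← (Equiv.funUnique (Fin 1) Q).symm.sum_comp]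

theorem stepDist_succ (M : MDP Q A) (σ : List (Q × A) → Q → A → ℝ) (d0 : Q → ℝ) (n : ℕ)
    (q : Q) :
    M.stepDist σ d0 (n + 1) q = ∑ q0, ∑ a0, d0 q0 * σ [] q0 a0 *
      M.stepDist (fun h => σ ((q0, a0) :: h)) (M.δ q0 a0) n q := by
  simp only [stepDist, Fintype.sum_fun_fin_succ (β := Q) (n := n + 1),
    Fintype.sum_fun_fin_succ (β := A) (n := n),
    ← Fin.succ_last, Fin.cons_succ, pathProb_cons, Finset.mul_sum, mul_ite, mul_zero]
  exact Finset.sum_congr rfl fun q0 _ => Finset.sum_comm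

theorem mass_eq_sum_filter (d : Q → ℝ) (S : Set Q) : mass d S = ∑ q with q ∈ S, d q := by
  simp only [mass, Finset.sum_filter, Set.indicator_apply]

theorem mass_nonneg {d : Q → ℝ} (hd : ∀ q, 0 ≤ d q) (S : Set Q) : 0 ≤ mass d S :=
  Finset.sum_nonneg fun q _ => Set.indicator_nonneg (fun y _ => hd y) q

theorem mass_add_mass_compl (d : Q → ℝ) (S : Set Q) : mass d S + mass d Sᶜ = ∑ q, d q := by
  simp only [mass, ← Finset.sum_add_distrib, Set.indicator_self_add_compl_apply]

theorem le_mass_of_mem {d : Q → ℝ} (hd : ∀ q, 0 ≤ d q) {S : Set Q} {q : Q} (hq : q ∈ S) :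
    d q ≤ mass d S := by
  rw [← Set.indicator_of_mem hq d]
  exact Finset.single_le_sum (fun x _ => Set.indicator_nonneg (fun y _ => hd y) x)
    (Finset.mem_univ q)

theorem mass_stepDist_succ (M : MDP Q A) (σ : List (Q × A) → Q → A → ℝ) (d0 : Q → ℝ) (n : ℕ)
    (S : Set Q) :
    mass (M.stepDist σ d0 (n + 1)) S = ∑ q0, ∑ a0, d0 q0 * σ [] q0 a0 *
      mass (M.stepDist (fun h => σ ((q0, a0) :: h)) (M.δ q0 a0) n) S := by
  simp only [mass_eq_sum_filter, stepDist_succ, Finset.mul_sum]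
  rw [Finset.sum_comm]
  exact Finset.sum_congr rfl fun q0 _ => Finset.sum_comm

theorem stepDist_nonneg (M : MDP Q A) {σ : List (Q × A) → Q → A → ℝ} (hσ : IsStrategy σ)
    {d0 : Q → ℝ} (hd0 : ∀ q, 0 ≤ d0 q) (n : ℕ) (q : Q) : 0 ≤ M.stepDist σ d0 n q := by
  induction n generalizing σ d0 with
  | zero => simpa only [stepDist_zero] using hd0 q
  | succ n ih =>
    rw [stepDist_succ]
    exact Finset.sum_nonneg fun q0 _ => Finset.sum_nonneg fun a0 _ =>
      mul_nonneg (mul_nonneg (hd0 q0) (hσ.1 _ _ _)) (ih (hσ.shift q0 a0) (M.δ_nonneg q0 a0))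

theorem sum_stepDist (M : MDP Q A) {σ : List (Q × A) → Q → A → ℝ} (hσ : IsStrategy σ)
    (d0 : Q → ℝ) (n : ℕ) : ∑ q, M.stepDist σ d0 n q = ∑ q, d0 q := by
  induction n generalizing σ d0 with
  | zero => rw [stepDist_zero]
  | succ n ih =>
    calc ∑ q, M.stepDist σ d0 (n + 1) q
        = ∑ q0, ∑ a0, d0 q0 * σ [] q0 a0 *
            ∑ q, M.stepDist (fun h => σ ((q0, a0) :: h)) (M.δ q0 a0) n q := by
          simp only [stepDist_succ, Finset.mul_sum]
          rw [Finset.sum_comm]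
          exact Finset.sum_congr rfl fun q0 _ => Finset.sum_comm
      _ = ∑ q0, d0 q0 * ∑ a0, σ [] q0 a0 := by
          simp only [ih (hσ.shift _ _), M.δ_sum, mul_one, Finset.mul_sum]
      _ = ∑ q0, d0 q0 := by simp only [hσ.2, mul_one]

theorem le_mass_compl_of_notMem_pre (M : MDP Q A) {α : ℝ}
    (hα : ∀ q a q', 0 < M.δ q a q' → α ≤ M.δ q a q') {Y : Set Q} {q : Q} (hq : q ∉ M.Pre Y)
    (a : A) : α ≤ mass (M.δ q a) Yᶜ := by
  simp only [Pre, Set.mem_ofPred_eq, not_exists, not_forall] at hq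
  obtain ⟨q', hpos, hq'⟩ := hq a
  exact (hα _ _ _ hpos).trans (le_mass_of_mem (M.δ_nonneg q a) hq')

theorem pow_mul_mass_compl_iterate_pre_le_mass_compl (M : MDP Q A) {α : ℝ} (hα0 : 0 ≤ α)
    (hα : ∀ q a q', 0 < M.δ q a q' → α ≤ M.δ q a q') (T : Set Q) (n : ℕ)
    {σ : List (Q × A) → Q → A → ℝ} (hσ : IsStrategy σ) {d0 : Q → ℝ} (hd0 : ∀ q, 0 ≤ d0 q) :
    α ^ n * mass d0 ((M.Pre)^[n] T)ᶜ ≤ mass (M.stepDist σ d0 n) Tᶜ := by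
  induction n generalizing σ d0 with
  | zero => simp only [pow_zero, one_mul, Function.iterate_zero_apply, stepDist_zero, le_refl]
  | succ n ih =>
    have hterm : ∀ q0 ∈ ((M.Pre)^[n + 1] T)ᶜ, α ^ (n + 1) * d0 q0
        ≤ ∑ a0, d0 q0 * σ [] q0 a0 *
            mass (M.stepDist (fun h => σ ((q0, a0) :: h)) (M.δ q0 a0) n) Tᶜ := by
      intro q0 hq0
      rw [Set.mem_compl_iff, Function.iterate_succ_apply'] at hq0
      calc α ^ (n + 1) * d0 q0 = ∑ a0, d0 q0 * σ [] q0 a0 * (α ^ n * α) := by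
            rw [← Finset.sum_mul, ← Finset.mul_sum, hσ.2, pow_succ]; ring
        _ ≤ _ := by
          gcongr with a0
          · exact mul_nonneg (hd0 q0) (hσ.1 _ _ _)
          · exact (mul_le_mul_of_nonneg_left (M.le_mass_compl_of_notMem_pre hα hq0 a0)
              (pow_nonneg hα0 n)).trans (ih (hσ.shift q0 a0) (M.δ_nonneg q0 a0))
    rw [mass_stepDist_succ, mass, Finset.mul_sum]
    refine Finset.sum_le_sum fun q0 _ => ?_
    by_cases hq0 : q0 ∈ ((M.Pre)^[n + 1] T)ᶜ
    · rw [Set.indicator_of_mem hq0]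
      exact hterm q0 hq0
    · rw [Set.indicator_of_notMem hq0, mul_zero]
      exact Finset.sum_nonneg fun a0 _ => mul_nonneg (mul_nonneg (hd0 q0) (hσ.1 _ _ _))
        (mass_nonneg (M.stepDist_nonneg (hσ.shift q0 a0) (M.δ_nonneg q0 a0) n) _)

end MDP

open MDP in
/-- If there is no `k` with `Supp(d0) ⊆ Pre^k(T)` (i.e. `d0` is not sure
eventually synchronizing in `T`), then `M^σ_i(T) ≤ 1 - α0 * α ^ i` for all `σ, i`. -/
theorem stmt1 {Q A : Type} [Fintype Q] [Fintype A] (M : MDP Q A)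
    (d0 : Q → ℝ) (hd0 : IsDist d0) (T : Set Q) (α α0 : ℝ)
    (hα : IsLeast {x : ℝ | 0 < x ∧ ∃ q a q', M.δ q a q' = x} α)
    (hα0 : IsLeast {x : ℝ | 0 < x ∧ ∃ q, d0 q = x} α0)
    (h : ¬ ∃ k : ℕ, supp d0 ⊆ (M.Pre)^[k] T) :
    ∀ σ, IsStrategy σ → ∀ i : ℕ,
      mass (M.stepDist σ d0 i) T ≤ 1 - α0 * α ^ i := by
  intro σ hσ i
  obtain ⟨q, hq_supp, hq_pre⟩ := Set.not_subset.mp fun hsub => h ⟨i, hsub⟩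
  have hα_le : ∀ q a q', 0 < M.δ q a q' → α ≤ M.δ q a q' :=
    fun q a q' hpos => hα.2 ⟨hpos, q, a, q', rfl⟩
  have hmass_compl : α0 * α ^ i ≤ mass (M.stepDist σ d0 i) Tᶜ :=
    calc α0 * α ^ i ≤ α ^ i * mass d0 ((M.Pre)^[i] T)ᶜ := by
          rw [mul_comm]
          gcongr
          · exact pow_nonneg hα.1.1.le i
          · exact (hα0.2 ⟨hq_supp, q, rfl⟩).trans (le_mass_of_mem hd0.1 hq_pre)
      _ ≤ _ := M.pow_mul_mass_compl_iterate_pre_le_mass_compl hα.1.1.le hα_le T i hσ hd0.1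
  have htotal := mass_add_mass_compl (M.stepDist σ d0 i) T
  rw [M.sum_stepDist hσ, hd0.2] at htotal
  linarith
end

section
/- In a finite MDP, if the initial distribution d0 is not limit-sure eventually synchronizing in T, then for all strategies σ and all i ≥ 0, M^σ_i(T) ≤ 1 − ε_e, where ε_e = α0·α^{(n+1)·2^n}, n = |Q|, α is the smallest positive transition probability, and α0 the smallest positive probability in d0. -/
open scoped BigOperators
open Classical Filter

namespace Aux3

open MDP

variable {Q A : Type} [Fintype Q] [Fintype A]

noncomputable def ind (T : Set Q) : Q → ℝ := fun q => if q ∈ T then 1 else 0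

omit [Fintype Q] in
lemma ind_nonneg (T : Set Q) (q : Q) : 0 ≤ ind T q := by
  unfold ind; split <;> norm_num

omit [Fintype Q] in
lemma ind_le_one (T : Set Q) (q : Q) : ind T q ≤ 1 := by
  unfold ind; split <;> norm_num

variable [Nonempty A]

noncomputable def F (M : MDP Q A) (g : Q → ℝ) : Q → ℝ :=
  fun q => Finset.univ.sup' Finset.univ_nonempty (fun a => ∑ q', M.δ q a q' * g q')

lemma le_F (M : MDP Q A) (g : Q → ℝ) (q : Q) (a : A) :
    ∑ q', M.δ q a q' * g q' ≤ F M g q := by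
  exact Finset.le_sup' (fun a => (∑ q', M.δ q a q' * g q' : ℝ)) (Finset.mem_univ a)

lemma F_le (M : MDP Q A) (g : Q → ℝ) (q : Q) (c : ℝ)
    (h : ∀ a, ∑ q', M.δ q a q' * g q' ≤ c) : F M g q ≤ c := by
  unfold F; exact Finset.sup'_le _ _ (fun a _ => h a)

lemma exists_F_eq (M : MDP Q A) (g : Q → ℝ) (q : Q) :
    ∃ a, F M g q = ∑ q', M.δ q a q' * g q' := by
  obtain ⟨a, _, ha⟩ := Finset.exists_mem_eq_sup'
    (Finset.univ_nonempty : (Finset.univ : Finset A).Nonempty)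
    (fun a => (∑ q', M.δ q a q' * g q' : ℝ))
  exact ⟨a, ha⟩

omit [Nonempty A] in
lemma sum_delta_mul_le (M : MDP Q A) (g : Q → ℝ) (q : Q) (a : A) (c : ℝ)
    (hg : ∀ q', g q' ≤ c) : ∑ q', M.δ q a q' * g q' ≤ c := by
  calc ∑ q', M.δ q a q' * g q' ≤ ∑ q', M.δ q a q' * c :=
        Finset.sum_le_sum (fun q' _ => mul_le_mul_of_nonneg_left (hg q') (M.δ_nonneg q a q'))
    _ = c := by rw [← Finset.sum_mul, M.δ_sum]; ring

lemma F_le_one (M : MDP Q A) (g : Q → ℝ) (hg : ∀ q, g q ≤ 1) (q : Q) : F M g q ≤ 1 :=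
  F_le _ _ _ _ (fun a => sum_delta_mul_le M g q a 1 hg)

lemma F_nonneg (M : MDP Q A) (g : Q → ℝ) (hg : ∀ q, 0 ≤ g q) (q : Q) : 0 ≤ F M g q := by
  obtain ⟨a⟩ := (inferInstance : Nonempty A)
  refine le_trans ?_ (le_F M g q a)
  exact Finset.sum_nonneg (fun q' _ => mul_nonneg (M.δ_nonneg q a q') (hg q'))

lemma F_mono (M : MDP Q A) {g g' : Q → ℝ} (h : ∀ q, g q ≤ g' q) (q : Q) :
    F M g q ≤ F M g' q := by
  refine F_le _ _ _ _ (fun a => le_trans ?_ (le_F M g' q a))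
  exact Finset.sum_le_sum (fun q' _ => mul_le_mul_of_nonneg_left (h q') (M.δ_nonneg q a q'))

noncomputable def v (M : MDP Q A) (T : Set Q) (i : ℕ) : Q → ℝ := (F M)^[i] (ind T)

lemma v_succ (M : MDP Q A) (T : Set Q) (i : ℕ) : v M T (i+1) = F M (v M T i) := by
  unfold v; rw [Function.iterate_succ_apply']

lemma v_nonneg (M : MDP Q A) (T : Set Q) (i : ℕ) (q : Q) : 0 ≤ v M T i q := by
  induction i generalizing q with
  | zero => exact ind_nonneg T q
  | succ n ih => rw [v_succ]; exact F_nonneg M _ ih q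

lemma v_le_one (M : MDP Q A) (T : Set Q) (i : ℕ) (q : Q) : v M T i q ≤ 1 := by
  induction i generalizing q with
  | zero => exact ind_le_one T q
  | succ n ih => rw [v_succ]; exact F_le_one M _ ih q

noncomputable def R (M : MDP Q A) (T : Set Q) : ℕ → Set Q
  | 0 => T
  | (k+1) => M.Pre (R M T k)

lemma v_eq_one_of_mem_R (M : MDP Q A) (T : Set Q) (j : ℕ) (q : Q)
    (hq : q ∈ R M T j) : v M T j q = 1 := by
  induction j generalizing q with
  | zero =>
    simp only [v, Function.iterate_zero, id, ind, R] at hq ⊢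
    simp [hq]
  | succ k ih =>
    obtain ⟨a, ha⟩ := hq
    refine le_antisymm (v_le_one M T _ q) ?_
    rw [v_succ]
    refine le_trans ?_ (le_F M _ q a)
    have : ∑ q', M.δ q a q' * v M T k q' = ∑ q', M.δ q a q' := by
      refine Finset.sum_congr rfl (fun q' _ => ?_)
      rcases lt_or_eq_of_le (M.δ_nonneg q a q') with hpos | hzero
      · rw [ih q' (ha q' hpos), mul_one]
      · rw [← hzero]; ring
    rw [this, M.δ_sum]

lemma R_congr_add (M : MDP Q A) (T : Set Q) {a b : ℕ} (h : R M T a = R M T b) (c : ℕ) :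
    R M T (a + c) = R M T (b + c) := by
  induction c with
  | zero => simpa using h
  | succ n ih => show R M T (a + n + 1) = R M T (b + n + 1); simp only [R, ih]

lemma R_periodic (M : MDP Q A) (T : Set Q) {k0 r : ℕ} (h : R M T k0 = R M T (k0 + r)) :
    ∀ t, R M T (k0 + t * r) = R M T k0 := by
  intro t
  induction t with
  | zero => simp
  | succ n ih =>
    have h2 := R_congr_add M T ih.symm r
    have hidx : k0 + (n+1) * r = k0 + n * r + r := by ring
    rw [hidx, ← h2]
    exact h.symm

section Alpha

variable {αp : ℝ} (M : MDP Q A)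
variable (hpos : 0 < αp) (hle1 : αp ≤ 1)
variable (hδ : ∀ q a q', 0 < M.δ q a q' → αp ≤ M.δ q a q')

include hpos hle1 hδ

lemma one_step (S : Set Q) (j : ℕ) (q : Q) :
    αp * (1 - v M (M.Pre S) j q) ≤ 1 - v M S (j+1) q := by
  induction j generalizing S q with
  | zero =>
    by_cases hq : q ∈ M.Pre S
    · have h0 : v M (M.Pre S) 0 q = 1 := by
        simp only [v, Function.iterate_zero, id, ind]; simp [hq]
      rw [h0]
      have := v_le_one M S 1 q
      linarith
    · have h0 : v M (M.Pre S) 0 q = 0 := by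
        simp only [v, Function.iterate_zero, id, ind]; simp [hq]
      rw [h0]
      have hub : v M S 1 q ≤ 1 - αp := by
        rw [show (1:ℕ) = 0 + 1 by rfl, v_succ]
        refine F_le M _ q _ (fun a => ?_)
        have hna : ¬ ∀ q', 0 < M.δ q a q' → q' ∈ S := fun hc => hq ⟨a, hc⟩
        push_neg at hna
        obtain ⟨q₀, hq0pos, hq0out⟩ := hna
        have hterm : ∀ q' ∈ Finset.univ,
            M.δ q a q' * v M S 0 q' ≤ M.δ q a q' - (if q' = q₀ then M.δ q a q₀ else 0) := by
          intro q' _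
          by_cases hv : q' = q₀
          · subst hv
            have : v M S 0 q' = 0 := by
              simp only [v, Function.iterate_zero, id, ind]; simp [hq0out]
            rw [this]; simp
          · simp only [hv, if_false, sub_zero]
            calc M.δ q a q' * v M S 0 q' ≤ M.δ q a q' * 1 :=
                  mul_le_mul_of_nonneg_left (v_le_one M S 0 q') (M.δ_nonneg q a q')
              _ = M.δ q a q' := mul_one _
        calc ∑ q', M.δ q a q' * v M S 0 q'
            ≤ ∑ q', (M.δ q a q' - (if q' = q₀ then M.δ q a q₀ else 0)) :=
              Finset.sum_le_sum hterm
          _ = 1 - M.δ q a q₀ := by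
              rw [Finset.sum_sub_distrib, M.δ_sum, Finset.sum_ite_eq' Finset.univ q₀]
              simp
          _ ≤ 1 - αp := by have := hδ q a q₀ hq0pos; linarith
      linarith
  | succ k ih =>
    have hub : v M S (k+2) q ≤ 1 - αp * (1 - v M (M.Pre S) (k+1) q) := by
      rw [v_succ]
      refine F_le M _ q _ (fun a => ?_)
      have h1 : ∀ q', v M S (k+1) q' ≤ 1 - αp * (1 - v M (M.Pre S) k q') := by
        intro q'; have := ih S q'; linarith
      calc ∑ q', M.δ q a q' * v M S (k+1) q'
          ≤ ∑ q', M.δ q a q' * (1 - αp * (1 - v M (M.Pre S) k q')) :=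
            Finset.sum_le_sum (fun q' _ =>
              mul_le_mul_of_nonneg_left (h1 q') (M.δ_nonneg q a q'))
        _ = (1 - αp) * (∑ q', M.δ q a q') + αp * ∑ q', M.δ q a q' * v M (M.Pre S) k q' := by
            rw [Finset.mul_sum, Finset.mul_sum, ← Finset.sum_add_distrib]
            refine Finset.sum_congr rfl (fun q' _ => ?_); ring
        _ = (1 - αp) + αp * ∑ q', M.δ q a q' * v M (M.Pre S) k q' := by rw [M.δ_sum, mul_one]
        _ ≤ (1 - αp) + αp * v M (M.Pre S) (k+1) q := by
            have h2 := le_F M (v M (M.Pre S) k) q a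
            rw [← v_succ] at h2
            nlinarith
        _ = 1 - αp * (1 - v M (M.Pre S) (k+1) q) := by ring
    linarith

lemma peel (T : Set Q) (k j : ℕ) (q : Q) :
    αp ^ k * (1 - v M (R M T k) j q) ≤ 1 - v M T (j + k) q := by
  induction k generalizing j with
  | zero => simp [R]
  | succ k ih =>
    have h1 : αp * (1 - v M (R M T (k+1)) j q) ≤ 1 - v M (R M T k) (j+1) q :=
      one_step M hpos hle1 hδ (R M T k) j q
    have h2 := ih (j+1)
    have hk : (0:ℝ) ≤ αp ^ k := le_of_lt (pow_pos hpos k)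
    calc αp ^ (k+1) * (1 - v M (R M T (k+1)) j q)
        = αp ^ k * (αp * (1 - v M (R M T (k+1)) j q)) := by ring
      _ ≤ αp ^ k * (1 - v M (R M T k) (j+1) q) := mul_le_mul_of_nonneg_left h1 hk
      _ ≤ 1 - v M T ((j+1) + k) q := h2
      _ = 1 - v M T (j + (k+1)) q := by rw [show j+1+k = j+(k+1) by omega]

lemma v_le_of_notMem_R (T : Set Q) (j : ℕ) (q : Q) (hq : q ∉ R M T j) :
    v M T j q ≤ 1 - αp ^ j := by
  have h := peel M hpos hle1 hδ T j 0 q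
  have h0 : v M (R M T j) 0 q = 0 := by
    simp only [v, Function.iterate_zero, id, ind]; simp [hq]
  rw [h0] at h
  simp only [zero_add] at h
  linarith

end Alpha

section Phi

variable (M : MDP Q A) (Rs : Set Q) (r : ℕ) [NeZero r]

noncomputable def phi : ℕ → Q → ZMod r → ℝ
  | 0 => fun q c => if q ∈ Rs ∧ c = 0 then 1 else 0
  | (m+1) => fun q c => max (if q ∈ Rs ∧ c = 0 then 1 else 0)
      (Finset.univ.sup' Finset.univ_nonempty
        (fun a => ∑ q', M.δ q a q' * phi m q' (c-1)))

lemma phi_nonneg : ∀ m q c, 0 ≤ phi M Rs r m q c := by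
  intro m
  induction m with
  | zero => intro q c; simp only [phi]; split <;> norm_num
  | succ m ih =>
    intro q c
    simp only [phi]
    refine le_max_of_le_left ?_
    split <;> norm_num

lemma phi_le_one : ∀ m q c, phi M Rs r m q c ≤ 1 := by
  intro m
  induction m with
  | zero => intro q c; simp only [phi]; split <;> norm_num
  | succ m ih =>
    intro q c
    simp only [phi]
    refine max_le ?_ ?_
    · split <;> norm_num
    · exact Finset.sup'_le _ _ (fun a _ => sum_delta_mul_le M _ q a 1 (fun q' => ih q' _))

lemma phi_mono_step : ∀ m q c, phi M Rs r m q c ≤ phi M Rs r (m+1) q c := by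
  intro m
  induction m with
  | zero => intro q c; simp only [phi]; exact le_max_left _ _
  | succ m ih =>
    intro q c
    simp only [phi]
    refine max_le (le_max_left _ _) (le_max_of_le_right ?_)
    refine Finset.sup'_le _ _ (fun a _ => ?_)
    refine le_trans ?_ (Finset.le_sup' _ (Finset.mem_univ a))
    exact Finset.sum_le_sum (fun q' _ =>
      mul_le_mul_of_nonneg_left (ih q' _) (M.δ_nonneg q a q'))

lemma phi_mono (q : Q) (c : ZMod r) : Monotone (fun m => phi M Rs r m q c) :=
  monotone_nat_of_le_succ (fun m => phi_mono_step M Rs r m q c)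

noncomputable def phistar (q : Q) (c : ZMod r) : ℝ := ⨆ m, phi M Rs r m q c

lemma phi_bdd (q : Q) (c : ZMod r) : BddAbove (Set.range fun m => phi M Rs r m q c) := by
  refine ⟨1, ?_⟩
  rintro x ⟨m, rfl⟩
  exact phi_le_one M Rs r m q c

lemma phi_le_phistar (m : ℕ) (q : Q) (c : ZMod r) :
    phi M Rs r m q c ≤ phistar M Rs r q c :=
  le_ciSup (phi_bdd M Rs r q c) m

lemma phistar_le (q : Q) (c : ZMod r) (x : ℝ) (h : ∀ m, phi M Rs r m q c ≤ x) :
    phistar M Rs r q c ≤ x := ciSup_le h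

lemma phistar_le_one (q : Q) (c : ZMod r) : phistar M Rs r q c ≤ 1 :=
  phistar_le M Rs r q c 1 (fun m => phi_le_one M Rs r m q c)

lemma phistar_nonneg (q : Q) (c : ZMod r) : 0 ≤ phistar M Rs r q c :=
  le_trans (phi_nonneg M Rs r 0 q c) (phi_le_phistar M Rs r 0 q c)

lemma phistar_tendsto (q : Q) (c : ZMod r) :
    Filter.Tendsto (fun m => phi M Rs r m q c) atTop (nhds (phistar M Rs r q c)) :=
  tendsto_atTop_ciSup (phi_mono M Rs r q c) (phi_bdd M Rs r q c)

noncomputable def pval (a : A) (q : Q) (c : ZMod r) : ℝ :=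
  ∑ q', M.δ q a q' * phistar M Rs r q' (c-1)

lemma pval_eq_isup (a : A) (q : Q) (c : ZMod r) :
    pval M Rs r a q c = ⨆ m, ∑ q', M.δ q a q' * phi M Rs r m q' (c-1) := by
  have hmono : Monotone (fun m => ∑ q', M.δ q a q' * phi M Rs r m q' (c-1)) := by
    intro m m' hmm
    exact Finset.sum_le_sum (fun q' _ => mul_le_mul_of_nonneg_left
      (phi_mono M Rs r q' (c-1) hmm) (M.δ_nonneg q a q'))
  have htend : Filter.Tendsto (fun m => ∑ q', M.δ q a q' * phi M Rs r m q' (c-1)) atTop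
      (nhds (pval M Rs r a q c)) := by
    unfold pval
    exact tendsto_finset_sum _ (fun q' _ =>
      (phistar_tendsto M Rs r q' (c-1)).const_mul _)
  exact ((isLUB_of_tendsto_atTop hmono htend).ciSup_eq).symm

lemma shift_bdd (q : Q) (c : ZMod r) :
    BddAbove (Set.range fun m => phi M Rs r (m+1) q c) := by
  refine ⟨1, ?_⟩
  rintro x ⟨m, rfl⟩
  exact phi_le_one M Rs r (m+1) q c

lemma supseq_bdd (q : Q) (c : ZMod r) :
    BddAbove (Set.range fun m => Finset.univ.sup' (Finset.univ_nonempty (α := A))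
      (fun a => ∑ q', M.δ q a q' * phi M Rs r m q' (c-1))) := by
  refine ⟨1, ?_⟩
  rintro x ⟨m, rfl⟩
  exact Finset.sup'_le _ _ (fun a _ =>
    sum_delta_mul_le M _ q a 1 (fun q' => phi_le_one M Rs r m q' _))

lemma phistar_fix (q : Q) (c : ZMod r) :
    phistar M Rs r q c = max (if q ∈ Rs ∧ c = 0 then (1:ℝ) else 0)
      (Finset.univ.sup' Finset.univ_nonempty (fun a => pval M Rs r a q c)) := by
  have hshift : phistar M Rs r q c = ⨆ m, phi M Rs r (m+1) q c := by
    refine le_antisymm ?_ (ciSup_le (fun m => phi_le_phistar M Rs r (m+1) q c))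
    refine phistar_le M Rs r q c _ (fun m => ?_)
    exact le_trans (phi_mono_step M Rs r m q c) (le_ciSup (shift_bdd M Rs r q c) m)
  have hsup : (⨆ m, Finset.univ.sup' (Finset.univ_nonempty (α := A))
      (fun a => ∑ q', M.δ q a q' * phi M Rs r m q' (c-1)))
      = Finset.univ.sup' Finset.univ_nonempty (fun a => pval M Rs r a q c) := by
    refine le_antisymm ?_ ?_
    · refine ciSup_le (fun m => Finset.sup'_le _ _ (fun a _ => ?_))
      refine le_trans ?_ (Finset.le_sup' (fun a => pval M Rs r a q c) (Finset.mem_univ a))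
      refine Finset.sum_le_sum (fun q' _ => mul_le_mul_of_nonneg_left
        (phi_le_phistar M Rs r m q' (c-1)) (M.δ_nonneg q a q'))
    · refine Finset.sup'_le _ _ (fun a _ => ?_)
      rw [pval_eq_isup]
      refine ciSup_le (fun m => ?_)
      refine le_trans (Finset.le_sup'
        (fun a => ∑ q', M.δ q a q' * phi M Rs r m q' (c-1)) (Finset.mem_univ a)) ?_
      exact le_ciSup (supseq_bdd M Rs r q c) m
  rw [← hsup, hshift]
  refine le_antisymm ?_ ?_
  · refine ciSup_le (fun m => ?_)
    simp only [phi]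
    refine max_le (le_max_left _ _) (le_max_of_le_right ?_)
    exact le_ciSup (supseq_bdd M Rs r q c) m
  · refine max_le ?_ ?_
    · refine le_trans ?_ (le_ciSup (shift_bdd M Rs r q c) 0)
      simp only [phi]
      exact le_max_left _ _
    · refine ciSup_le (fun m => ?_)
      refine le_trans ?_ (le_ciSup (shift_bdd M Rs r q c) m)
      simp only [phi]
      exact le_max_right _ _

end Phi


section Gap

variable (M : MDP Q A) (Rs : Set Q) (r : ℕ) [NeZero r]
variable {αp : ℝ}

lemma pval_nonneg (a : A) (q : Q) (c : ZMod r) : 0 ≤ pval M Rs r a q c :=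
  Finset.sum_nonneg (fun q' _ => mul_nonneg (M.δ_nonneg q a q')
    (phistar_nonneg M Rs r q' (c-1)))

lemma pval_le_one (a : A) (q : Q) (c : ZMod r) : pval M Rs r a q c ≤ 1 :=
  sum_delta_mul_le M _ q a 1 (fun q' => phistar_le_one M Rs r q' (c-1))

lemma phistar_eq_sup_pval (x : Q × ZMod r) (hx : phistar M Rs r x.1 x.2 < 1) :
    phistar M Rs r x.1 x.2
      = Finset.univ.sup' Finset.univ_nonempty (fun a => pval M Rs r a x.1 x.2) := by
  have hnot : ¬ (x.1 ∈ Rs ∧ x.2 = 0) := by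
    intro hc
    have h0 : phi M Rs r 0 x.1 x.2 = 1 := by simp only [phi]; simp [hc]
    have := phi_le_phistar M Rs r 0 x.1 x.2
    rw [h0] at this; linarith
  have := phistar_fix M Rs r x.1 x.2
  rw [if_neg hnot] at this
  rw [this]
  refine max_eq_right ?_
  obtain ⟨a⟩ := (inferInstance : Nonempty A)
  exact le_trans (pval_nonneg M Rs r a x.1 x.2)
    (Finset.le_sup' (fun a => pval M Rs r a x.1 x.2) (Finset.mem_univ a))

lemma gap (hpos : 0 < αp) (hle1 : αp ≤ 1)
    (hδ : ∀ q a q', 0 < M.δ q a q' → αp ≤ M.δ q a q') :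
    ∀ x : Q × ZMod r, phistar M Rs r x.1 x.2 < 1 →
      phistar M Rs r x.1 x.2 ≤ 1 - αp ^ (Fintype.card Q * r) := by
  set ps : Q × ZMod r → ℝ := fun x => phistar M Rs r x.1 x.2 with hps
  have hpsle1 : ∀ x, ps x ≤ 1 := fun x => phistar_le_one M Rs r x.1 x.2
  have hpsnn : ∀ x, 0 ≤ ps x := fun x => phistar_nonneg M Rs r x.1 x.2
  set dd : (Q × ZMod r) → ℕ :=
    fun x => (Finset.univ.filter (fun y => ps y < 1 ∧ ps y ≤ ps x)).card with hdd
  have main : ∀ n, ∀ x : Q × ZMod r, ps x < 1 → dd x ≤ n → αp ^ n ≤ 1 - ps x := by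
    intro n
    induction n with
    | zero =>
      intro x hx hdx
      exfalso
      have hmem : x ∈ Finset.univ.filter (fun y => ps y < 1 ∧ ps y ≤ ps x) :=
        Finset.mem_filter.mpr ⟨Finset.mem_univ x, hx, le_refl _⟩
      have : 0 < dd x := Finset.card_pos.mpr ⟨x, hmem⟩
      omega
    | succ n ih =>
      intro x hx hdx
      by_cases hβ0 : ps x ≤ 0
      · have := pow_le_one₀ (le_of_lt hpos) hle1 (n := n+1)
        linarith
      push_neg at hβ0
      set β := ps x with hβ
      -- does an exit pair exist?
      by_cases hexit : ∃ y : Q × ZMod r, ps y = β ∧ ∃ a, pval M Rs r a y.1 y.2 = β ∧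
          ∃ q'', 0 < M.δ y.1 a q'' ∧ ps (q'', y.2 - 1) < β
      · obtain ⟨y, hyβ, a, hva, q'', hq''pos, hq''lt⟩ := hexit
        set x' : Q × ZMod r := (q'', y.2 - 1) with hx'
        have hx'lt1 : ps x' < 1 := lt_trans hq''lt hx
        have hddlt : dd x' < dd x := by
          refine Finset.card_lt_card ?_
          constructor
          · intro z hz
            obtain ⟨_, hz1, hz2⟩ := Finset.mem_filter.mp hz
            exact Finset.mem_filter.mpr ⟨Finset.mem_univ z, hz1,
              le_trans hz2 (le_of_lt hq''lt)⟩
          · intro hsub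
            have hxmem : x ∈ Finset.univ.filter (fun y => ps y < 1 ∧ ps y ≤ ps x) :=
              Finset.mem_filter.mpr ⟨Finset.mem_univ x, hx, le_refl _⟩
            have := Finset.mem_filter.mp (hsub hxmem)
            have := this.2.2
            rw [← hβ] at this
            exact absurd (lt_of_le_of_lt this hq''lt) (lt_irrefl _)
        have hIH : αp ^ n ≤ 1 - ps x' := ih x' hx'lt1 (by omega)
        -- 1 - β ≥ δ(y.1,a,q'') * (1 - ps x')
        have hsum : pval M Rs r a y.1 y.2 = ∑ q', M.δ y.1 a q' * ps (q', y.2 - 1) := rfl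
        have hkey : M.δ y.1 a q'' * (1 - ps x') ≤ 1 - β := by
          have h1 : (1:ℝ) - β = ∑ q', M.δ y.1 a q' * (1 - ps (q', y.2 - 1)) := by
            have : ∑ q', M.δ y.1 a q' * (1 - ps (q', y.2 - 1))
                = (∑ q', M.δ y.1 a q') - ∑ q', M.δ y.1 a q' * ps (q', y.2 - 1) := by
              rw [← Finset.sum_sub_distrib]
              refine Finset.sum_congr rfl (fun q' _ => by ring)
            rw [this, M.δ_sum, ← hsum, hva]
          rw [h1]
          refine Finset.single_le_sum (f := fun q' => M.δ y.1 a q' * (1 - ps (q', y.2 - 1)))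
            (fun q' _ => mul_nonneg (M.δ_nonneg y.1 a q') (by have := hpsle1 (q', y.2 - 1); linarith))
            (Finset.mem_univ q'')
        have hδa : αp ≤ M.δ y.1 a q'' := hδ y.1 a q'' hq''pos
        have h1ps : 0 ≤ 1 - ps x' := by have := hpsle1 x'; linarith
        calc αp ^ (n+1) = αp * αp ^ n := by ring
          _ ≤ αp * (1 - ps x') := mul_le_mul_of_nonneg_left hIH (le_of_lt hpos)
          _ ≤ M.δ y.1 a q'' * (1 - ps x') := mul_le_mul_of_nonneg_right hδa h1ps
          _ ≤ 1 - β := hkey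
      · -- no exit: derive a contradiction
        exfalso
        push_neg at hexit
        set Pl : Finset (Q × ZMod r) := Finset.univ.filter (fun y => ps y = β) with hPl
        have hxPl : x ∈ Pl := Finset.mem_filter.mpr ⟨Finset.mem_univ x, rfl⟩
        have hPlne : Pl.Nonempty := ⟨x, hxPl⟩
        have hprodne : (Pl ×ˢ (Finset.univ : Finset A)).Nonempty :=
          hPlne.product Finset.univ_nonempty
        set ent : (Q × ZMod r) × A → ℝ := fun yz =>
          if pval M Rs r yz.2 yz.1.1 yz.1.2 < β then max (pval M Rs r yz.2 yz.1.1 yz.1.2) 0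
          else 0 with hent
        set γ : ℝ := (Pl ×ˢ (Finset.univ : Finset A)).sup' hprodne ent with hγ
        have hentnn : ∀ yz, 0 ≤ ent yz := by
          intro yz
          simp only [hent]
          split
          · exact le_max_right _ _
          · exact le_refl 0
        have hγnn : 0 ≤ γ := by
          refine le_trans (hentnn (x, Classical.arbitrary A)) ?_
          exact Finset.le_sup' ent (Finset.mem_product.mpr ⟨hxPl, Finset.mem_univ _⟩)
        have hγlt : γ < β := by
          rw [hγ]
          rw [Finset.sup'_lt_iff]
          intro yz _
          simp only [hent]
          split
          · exact max_lt (by assumption) hβ0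
          · exact hβ0
        -- plateau members: value given by sup of pval, each pval ≤ β
        have hplval : ∀ y ∈ Pl, ps y
            = Finset.univ.sup' Finset.univ_nonempty (fun a => pval M Rs r a y.1 y.2) := by
          intro y hy
          have hyβ : ps y = β := (Finset.mem_filter.mp hy).2
          exact phistar_eq_sup_pval M Rs r y (by show ps y < 1; rw [hyβ]; exact hx)
        have hpvalle : ∀ y ∈ Pl, ∀ a, pval M Rs r a y.1 y.2 ≤ β := by
          intro y hy a
          have hyβ : ps y = β := (Finset.mem_filter.mp hy).2
          calc pval M Rs r a y.1 y.2
              ≤ Finset.univ.sup' Finset.univ_nonempty (fun a => pval M Rs r a y.1 y.2) :=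
                Finset.le_sup' (fun a => pval M Rs r a y.1 y.2) (Finset.mem_univ a)
            _ = ps y := (hplval y hy).symm
            _ = β := hyβ
        -- optimal actions keep successors on the plateau
        have hclosed : ∀ y ∈ Pl, ∀ a, pval M Rs r a y.1 y.2 = β →
            ∀ q', 0 < M.δ y.1 a q' → ps (q', y.2 - 1) = β := by
          intro y hy a hva q' hq'
          have hyβ : ps y = β := (Finset.mem_filter.mp hy).2
          have hge : ∀ q'', 0 < M.δ y.1 a q'' → β ≤ ps (q'', y.2 - 1) := by
            intro q'' hq''
            by_contra hlt
            push_neg at hlt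
            exact absurd hlt (by
              have := hexit y hyβ a hva q'' hq''
              linarith)
          have hexp : pval M Rs r a y.1 y.2 = ∑ q'', M.δ y.1 a q'' * ps (q'', y.2 - 1) := rfl
          have hzero : ∑ q'', M.δ y.1 a q'' * (ps (q'', y.2 - 1) - β) = 0 := by
            have hsplit : ∑ q'', M.δ y.1 a q'' * (ps (q'', y.2 - 1) - β)
                = (∑ q'', M.δ y.1 a q'' * ps (q'', y.2 - 1)) - ∑ q'', β * M.δ y.1 a q'' := by
              rw [← Finset.sum_sub_distrib]
              refine Finset.sum_congr rfl (fun q'' _ => by ring)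
            rw [hsplit, ← hexp, ← Finset.mul_sum, M.δ_sum, hva]; ring
          have hnn : ∀ z ∈ Finset.univ, 0 ≤ M.δ y.1 a z * (ps (z, y.2 - 1) - β) := by
            intro z _
            rcases lt_or_eq_of_le (M.δ_nonneg y.1 a z) with hp | hp
            · exact mul_nonneg (le_of_lt hp) (by have := hge z hp; linarith)
            · rw [← hp, zero_mul]
          have hterm := (Finset.sum_eq_zero_iff_of_nonneg hnn).mp hzero q' (Finset.mem_univ q')
          rcases mul_eq_zero.mp hterm with h0 | h0
          · exact absurd h0 (ne_of_gt hq')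
          · linarith
        -- by induction all phi values on the plateau are ≤ γ
        have hind : ∀ m, ∀ y ∈ Pl, phi M Rs r m y.1 y.2 ≤ γ := by
          intro m
          induction m with
          | zero =>
            intro y hy
            have hyβ : ps y = β := (Finset.mem_filter.mp hy).2
            have hnot : ¬ (y.1 ∈ Rs ∧ y.2 = 0) := by
              intro hc
              have h0 : phi M Rs r 0 y.1 y.2 = 1 := by simp only [phi]; simp [hc]
              have := phi_le_phistar M Rs r 0 y.1 y.2
              rw [h0] at this
              have : (1:ℝ) ≤ β := by rw [← hyβ]; exact this
              linarith
            simp only [phi, if_neg hnot]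
            exact hγnn
          | succ m ihm =>
            intro y hy
            have hyβ : ps y = β := (Finset.mem_filter.mp hy).2
            have hnot : ¬ (y.1 ∈ Rs ∧ y.2 = 0) := by
              intro hc
              have h0 : phi M Rs r 0 y.1 y.2 = 1 := by simp only [phi]; simp [hc]
              have := phi_le_phistar M Rs r 0 y.1 y.2
              rw [h0] at this
              have : (1:ℝ) ≤ β := by rw [← hyβ]; exact this
              linarith
            simp only [phi, if_neg hnot]
            refine max_le hγnn ?_
            refine Finset.sup'_le _ _ (fun a _ => ?_)
            by_cases hva : pval M Rs r a y.1 y.2 = β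
            · -- optimal action: successors stay on plateau
              have hsucc := hclosed y hy a hva
              calc ∑ q', M.δ y.1 a q' * phi M Rs r m q' (y.2 - 1)
                  ≤ ∑ q', M.δ y.1 a q' * γ := by
                    refine Finset.sum_le_sum (fun q' _ => ?_)
                    rcases lt_or_eq_of_le (M.δ_nonneg y.1 a q') with hp | hp
                    · refine mul_le_mul_of_nonneg_left ?_ (le_of_lt hp)
                      refine ihm (q', y.2 - 1) ?_
                      exact Finset.mem_filter.mpr ⟨Finset.mem_univ _, hsucc q' hp⟩
                    · rw [← hp]; simp
                _ = γ := by rw [← Finset.sum_mul, M.δ_sum, one_mul]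
            · -- suboptimal action
              have hlt : pval M Rs r a y.1 y.2 < β :=
                lt_of_le_of_ne (hpvalle y hy a) hva
              have h1 : ∑ q', M.δ y.1 a q' * phi M Rs r m q' (y.2 - 1)
                  ≤ pval M Rs r a y.1 y.2 := by
                refine Finset.sum_le_sum (fun q' _ => ?_)
                exact mul_le_mul_of_nonneg_left (phi_le_phistar M Rs r m q' (y.2 - 1))
                  (M.δ_nonneg y.1 a q')
              refine le_trans h1 ?_
              have hmem : (y, a) ∈ Pl ×ˢ (Finset.univ : Finset A) :=
                Finset.mem_product.mpr ⟨hy, Finset.mem_univ a⟩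
              have := Finset.le_sup' ent hmem
              have hentval : ent (y, a) = max (pval M Rs r a y.1 y.2) 0 := by
                simp only [hent, if_pos hlt]
              rw [hentval] at this
              exact le_trans (le_max_left _ _) this
        have hxγ : β ≤ γ := phistar_le M Rs r x.1 x.2 γ (fun m => hind m x hxPl)
        linarith
  intro x hx
  have hdN : dd x ≤ Fintype.card Q * r := by
    calc dd x ≤ (Finset.univ : Finset (Q × ZMod r)).card := Finset.card_filter_le _ _
      _ = Fintype.card (Q × ZMod r) := rfl
      _ = Fintype.card Q * r := by rw [Fintype.card_prod, ZMod.card]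
  have h1 := main (dd x) x hx (le_refl _)
  have h2 : αp ^ (Fintype.card Q * r) ≤ αp ^ (dd x) :=
    pow_le_pow_of_le_one (le_of_lt hpos) hle1 hdN
  linarith

end Gap

section Bridge

variable (M : MDP Q A)

lemma v_le_phi (Rs : Set Q) (r : ℕ) [NeZero r] :
    ∀ m q, v M Rs m q ≤ phi M Rs r m q ((m : ℕ) : ZMod r) := by
  intro m
  induction m with
  | zero =>
    intro q
    have h0 : ((0 : ℕ) : ZMod r) = 0 := Nat.cast_zero
    simp only [v, Function.iterate_zero, id, ind, phi, h0]
    by_cases hq : q ∈ Rs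
    · simp [hq]
    · simp [hq]
  | succ m ih =>
    intro q
    rw [v_succ]
    have hcast : (((m+1 : ℕ)) : ZMod r) - 1 = ((m : ℕ) : ZMod r) := by
      push_cast; ring
    show F M (v M Rs m) q ≤ phi M Rs r (m+1) q (((m+1 : ℕ)) : ZMod r)
    simp only [phi, hcast]
    refine le_max_of_le_right ?_
    refine F_le M _ q _ (fun a => ?_)
    refine le_trans ?_ (Finset.le_sup'
      (fun a => ∑ q', M.δ q a q' * phi M Rs r m q' ((m : ℕ) : ZMod r)) (Finset.mem_univ a))
    exact Finset.sum_le_sum (fun q' _ =>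
      mul_le_mul_of_nonneg_left (ih q') (M.δ_nonneg q a q'))

lemma v_eq_one_of_periodic (T : Set Q) (k0 r : ℕ) (hr : 0 < r)
    (hper : R M T k0 = R M T (k0 + r)) (j : ℕ) (q : Q)
    (hjk : (j : ZMod r) = (k0 : ZMod r)) (hjge : k0 ≤ j) (hq : q ∈ R M T k0) :
    v M T j q = 1 := by
  have hmod : j ≡ k0 [MOD r] := (ZMod.natCast_eq_natCast_iff _ _ _).mp hjk
  have hdvd : r ∣ j - k0 := (Nat.modEq_iff_dvd' hjge).mp hmod.symm
  obtain ⟨t, ht⟩ := hdvd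
  have hj : j = k0 + t * r := by rw [Nat.mul_comm] at ht; omega
  have hRj : R M T j = R M T k0 := by
    rw [hj, show k0 + t * r = k0 + t * r from rfl]
    exact R_periodic M T hper t
  exact v_eq_one_of_mem_R M T j q (by rw [hRj]; exact hq)

lemma phi_le_v (T : Set Q) (k0 r : ℕ) (hr : 0 < r) [NeZero r]
    (hper : R M T k0 = R M T (k0 + r)) :
    ∀ m (s : ZMod r) q (j : ℕ), ((j : ZMod r) = s + (k0 : ZMod r)) → m + k0 ≤ j →
      phi M (R M T k0) r m q s ≤ v M T j q := by
  intro m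
  induction m with
  | zero =>
    intro s q j hjs hjge
    simp only [phi]
    split
    · rename_i hc
      obtain ⟨hqR, hs0⟩ := hc
      rw [hs0, zero_add] at hjs
      rw [v_eq_one_of_periodic M T k0 r hr hper j q hjs (by omega) hqR]
    · exact v_nonneg M T j q
  | succ m ih =>
    intro s q j hjs hjge
    obtain ⟨j', rfl⟩ : ∃ j', j = j' + 1 := ⟨j - 1, by omega⟩
    simp only [phi]
    refine max_le ?_ ?_
    · split
      · rename_i hc
        obtain ⟨hqR, hs0⟩ := hc
        rw [hs0, zero_add] at hjs
        rw [v_eq_one_of_periodic M T k0 r hr hper (j'+1) q hjs (by omega) hqR]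
      · exact v_nonneg M T _ q
    · refine Finset.sup'_le _ _ (fun a _ => ?_)
      have hc' : ((j' : ℕ) : ZMod r) = (s - 1) + (k0 : ZMod r) := by
        have : ((j' + 1 : ℕ) : ZMod r) = s + (k0 : ZMod r) := hjs
        push_cast at this ⊢
        linear_combination this
      have hstep : ∀ q', phi M (R M T k0) r m q' (s-1) ≤ v M T j' q' :=
        fun q' => ih (s-1) q' j' hc' (by omega)
      rw [v_succ]
      refine le_trans ?_ (le_F M _ q a)
      exact Finset.sum_le_sum (fun q' _ =>
        mul_le_mul_of_nonneg_left (hstep q') (M.δ_nonneg q a q'))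

lemma exists_period (T : Set Q) :
    ∃ k0 r : ℕ, 0 < r ∧ k0 + r ≤ 2 ^ (Fintype.card Q) ∧
      R M T k0 = R M T (k0 + r) := by
  have hcard : (Finset.range (2 ^ (Fintype.card Q) + 1)).card
      > Fintype.card (Set Q) := by
    rw [Finset.card_range, Fintype.card_set]
    omega
  obtain ⟨a, ha, b, hb, hab, heq⟩ :=
    Finset.exists_ne_map_eq_of_card_lt_of_maps_to hcard
      (f := fun k => R M T k) (fun k _ => Finset.mem_univ _)
  rcases Nat.lt_or_ge a b with hlt | hge
  · refine ⟨a, b - a, by omega, ?_, ?_⟩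
    · have := Finset.mem_range.mp hb; omega
    · rw [show a + (b - a) = b by omega]; exact heq
  · have hlt : b < a := by omega
    refine ⟨b, a - b, by omega, ?_, ?_⟩
    · have := Finset.mem_range.mp ha; omega
    · rw [show b + (a - b) = a by omega]; exact heq.symm

end Bridge

section Paths

variable (M : MDP Q A)

noncomputable def Phi (σ : List (Q × A) → Q → A → ℝ) (d0 : Q → ℝ)
    (i : ℕ) (g : Q → ℝ) : ℝ :=
  ∑ qs : Fin (i + 1) → Q, ∑ as : Fin i → A,
    M.pathProb σ d0 i qs as * g (qs (Fin.last i))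

omit [Nonempty A] in
lemma pathProb_nonneg (σ : List (Q × A) → Q → A → ℝ) (d0 : Q → ℝ)
    (hσ : ∀ h q a, 0 ≤ σ h q a) (hd0 : ∀ q, 0 ≤ d0 q)
    (i : ℕ) (qs : Fin (i+1) → Q) (as : Fin i → A) :
    0 ≤ M.pathProb σ d0 i qs as := by
  unfold MDP.pathProb
  refine mul_nonneg (hd0 _) (Finset.prod_nonneg (fun j _ => ?_))
  exact mul_nonneg (hσ _ _ _) (M.δ_nonneg _ _ _)

omit [Nonempty A] in
lemma mass_eq_sum_ind (d : Q → ℝ) (T : Set Q) :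
    MDP.mass d T = ∑ q, d q * ind T q := by
  unfold MDP.mass
  refine Finset.sum_congr rfl (fun q _ => ?_)
  rw [Set.indicator_apply]
  unfold ind
  split <;> simp

lemma mass_eq_Phi (σ : List (Q × A) → Q → A → ℝ) (d0 : Q → ℝ) (i : ℕ) (T : Set Q) :
    MDP.mass (M.stepDist σ d0 i) T = Phi M σ d0 i (ind T) := by
  rw [mass_eq_sum_ind]
  unfold Phi MDP.stepDist
  have h1 : ∀ q : Q, (∑ qs : Fin (i+1) → Q, ∑ as : Fin i → A,
      if qs (Fin.last i) = q then M.pathProb σ d0 i qs as else 0) * ind T q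
      = ∑ qs : Fin (i+1) → Q, ∑ as : Fin i → A,
        (if qs (Fin.last i) = q then M.pathProb σ d0 i qs as else 0) * ind T q := by
    intro q
    rw [Finset.sum_mul]
    exact Finset.sum_congr rfl (fun qs _ => by rw [Finset.sum_mul])
  rw [Finset.sum_congr rfl (fun q _ => h1 q)]
  rw [Finset.sum_comm]
  refine Finset.sum_congr rfl (fun qs _ => ?_)
  rw [Finset.sum_comm]
  refine Finset.sum_congr rfl (fun as _ => ?_)
  have h2 : ∀ q : Q, (if qs (Fin.last i) = q then M.pathProb σ d0 i qs as else 0) * ind T q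
      = (if qs (Fin.last i) = q then M.pathProb σ d0 i qs as * ind T q else 0) := by
    intro q; split <;> simp
  rw [Finset.sum_congr rfl (fun q _ => h2 q)]
  rw [Finset.sum_ite_eq Finset.univ (qs (Fin.last i))
    (fun q => M.pathProb σ d0 i qs as * ind T q)]
  simp

def snocEquiv (m : ℕ) (β : Type) : ((Fin m → β) × β) ≃ (Fin (m+1) → β) where
  toFun p := Fin.snoc p.1 p.2
  invFun f := (Fin.init f, f (Fin.last m))
  left_inv p := by
    ext
    · simp
    · simp
  right_inv f := by simp

omit [Fintype Q] [Fintype A] [Nonempty A] in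
lemma sum_snoc {m : ℕ} {β : Type} [Fintype β] (G : (Fin (m+1) → β) → ℝ) :
    ∑ f : Fin (m+1) → β, G f = ∑ f : Fin m → β, ∑ x : β, G (Fin.snoc f x) := by
  rw [← Equiv.sum_comp (snocEquiv m β) G, Fintype.sum_prod_type]
  rfl

omit [Fintype Q] [Fintype A] [Nonempty A] in
lemma snoc_apply_lt {m : ℕ} {β : Type} (f : Fin m → β) (x : β) (k : ℕ)
    (h1 : k < m + 1) (h2 : k < m) :
    (Fin.snoc f x : Fin (m+1) → β) (⟨k, h1⟩ : Fin (m+1)) = f ⟨k, h2⟩ := by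
  have he : (⟨k, h1⟩ : Fin (m+1)) = Fin.castSucc ⟨k, h2⟩ := by
    apply Fin.ext; rfl
  rw [he, Fin.snoc_castSucc]

def H (i : ℕ) (qs : Fin (i+1) → Q) (as : Fin i → A) : List (Q × A) :=
  List.ofFn (fun k : Fin i => (qs k.castSucc, as k))

omit [Fintype Q] [Fintype A] [Nonempty A] in
lemma H_length (i : ℕ) (qs : Fin (i+1) → Q) (as : Fin i → A) :
    (H i qs as).length = i := by
  unfold H; simp

omit [Nonempty A] in
lemma pathProb_snoc (σ : List (Q × A) → Q → A → ℝ) (d0 : Q → ℝ) (i : ℕ)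
    (qs : Fin (i+1) → Q) (as : Fin i → A) (q' : Q) (a : A) :
    M.pathProb σ d0 (i+1) (Fin.snoc qs q') (Fin.snoc as a)
      = M.pathProb σ d0 i qs as *
        (σ (H i qs as) (qs (Fin.last i)) a * M.δ (qs (Fin.last i)) a q') := by
  unfold MDP.pathProb
  rw [Fin.prod_univ_castSucc]
  have h0 : (Fin.snoc qs q' : Fin (i+2) → Q) 0 = qs 0 := by
    exact snoc_apply_lt qs q' 0 (by omega) (by omega)
  have hlast : (σ (List.ofFn (fun k : Fin (Fin.last i).val =>
        ((Fin.snoc qs q' : Fin (i+2) → Q)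
            ⟨k.val, by have := k.isLt; have := (Fin.last i).isLt; omega⟩,
         (Fin.snoc as a : Fin (i+1) → A)
            ⟨k.val, by have := k.isLt; have := (Fin.last i).isLt; omega⟩)))
        ((Fin.snoc qs q' : Fin (i+2) → Q) (Fin.last i).castSucc)
        ((Fin.snoc as a : Fin (i+1) → A) (Fin.last i)))
      * M.δ ((Fin.snoc qs q' : Fin (i+2) → Q) (Fin.last i).castSucc)
          ((Fin.snoc as a : Fin (i+1) → A) (Fin.last i))
          ((Fin.snoc qs q' : Fin (i+2) → Q) (Fin.last i).succ)
      = σ (H i qs as) (qs (Fin.last i)) a * M.δ (qs (Fin.last i)) a q' := by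
    have e1 : (Fin.snoc qs q' : Fin (i+2) → Q) (Fin.last i).castSucc = qs (Fin.last i) := by
      simp
    have e2 : (Fin.snoc as a : Fin (i+1) → A) (Fin.last i) = a := by simp
    have e3 : (Fin.snoc qs q' : Fin (i+2) → Q) (Fin.last i).succ = q' := by
      rw [Fin.succ_last, Fin.snoc_last]
    have e4 : (List.ofFn (fun k : Fin (Fin.last i).val =>
        ((Fin.snoc qs q' : Fin (i+2) → Q)
            ⟨k.val, by have := k.isLt; have := (Fin.last i).isLt; omega⟩,
         (Fin.snoc as a : Fin (i+1) → A)
            ⟨k.val, by have := k.isLt; have := (Fin.last i).isLt; omega⟩)))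
        = H i qs as := by
      unfold H
      have hval : (Fin.last i).val = i := rfl
      congr 1
      funext k
      congr 1
      · rw [snoc_apply_lt qs q' k.val (by have := k.isLt; omega) (by have := k.isLt; omega)]
        congr 1
      · rw [snoc_apply_lt as a k.val (by have := k.isLt; omega) (by have := k.isLt; omega)]
        congr 1
    rw [e1, e2, e3, e4]
  rw [h0, hlast]
  have hinit : ∀ j : Fin i,
      (σ (List.ofFn (fun k : Fin (Fin.castSucc j).val =>
        ((Fin.snoc qs q' : Fin (i+2) → Q)
            ⟨k.val, by have := k.isLt; have := (Fin.castSucc j).isLt; omega⟩,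
         (Fin.snoc as a : Fin (i+1) → A)
            ⟨k.val, by have := k.isLt; have := (Fin.castSucc j).isLt; omega⟩)))
        ((Fin.snoc qs q' : Fin (i+2) → Q) (Fin.castSucc j).castSucc)
        ((Fin.snoc as a : Fin (i+1) → A) (Fin.castSucc j)))
      * M.δ ((Fin.snoc qs q' : Fin (i+2) → Q) (Fin.castSucc j).castSucc)
          ((Fin.snoc as a : Fin (i+1) → A) (Fin.castSucc j))
          ((Fin.snoc qs q' : Fin (i+2) → Q) (Fin.castSucc j).succ)
      = (σ (List.ofFn (fun k : Fin j.val =>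
          (qs ⟨k.val, by have := k.isLt; have := j.isLt; omega⟩,
           as ⟨k.val, by have := k.isLt; have := j.isLt; omega⟩)))
          (qs j.castSucc) (as j))
        * M.δ (qs j.castSucc) (as j) (qs j.succ) := by
    intro j
    have e1 : (Fin.snoc qs q' : Fin (i+2) → Q) (Fin.castSucc j).castSucc
        = qs j.castSucc := by simp
    have e2 : (Fin.snoc as a : Fin (i+1) → A) (Fin.castSucc j) = as j := by simp
    have e3 : (Fin.snoc qs q' : Fin (i+2) → Q) (Fin.castSucc j).succ = qs j.succ := by
      rw [Fin.succ_castSucc, Fin.snoc_castSucc]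
    have e4 : (List.ofFn (fun k : Fin (Fin.castSucc j).val =>
        ((Fin.snoc qs q' : Fin (i+2) → Q)
            ⟨k.val, by have := k.isLt; have := (Fin.castSucc j).isLt; omega⟩,
         (Fin.snoc as a : Fin (i+1) → A)
            ⟨k.val, by have := k.isLt; have := (Fin.castSucc j).isLt; omega⟩)))
        = (List.ofFn (fun k : Fin j.val =>
          (qs ⟨k.val, by have := k.isLt; have := j.isLt; omega⟩,
           as ⟨k.val, by have := k.isLt; have := j.isLt; omega⟩))) := by
      have hval : (Fin.castSucc j).val = j.val := rfl
      congr 1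
      funext k
      have hk1 : k.val < i + 1 := by have := k.isLt; have := j.isLt; omega
      have hk2 : k.val < i := by have := k.isLt; have := j.isLt; omega
      congr 1
      · rw [snoc_apply_lt qs q' k.val (by omega) hk1]
      · rw [snoc_apply_lt as a k.val (by omega) hk2]
    rw [e1, e2, e3, e4]
  have hprod : ∏ j : Fin i,
      (σ (List.ofFn (fun k : Fin (Fin.castSucc j).val =>
        ((Fin.snoc qs q' : Fin (i+2) → Q)
            ⟨k.val, by have := k.isLt; have := (Fin.castSucc j).isLt; omega⟩,
         (Fin.snoc as a : Fin (i+1) → A)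
            ⟨k.val, by have := k.isLt; have := (Fin.castSucc j).isLt; omega⟩)))
        ((Fin.snoc qs q' : Fin (i+2) → Q) (Fin.castSucc j).castSucc)
        ((Fin.snoc as a : Fin (i+1) → A) (Fin.castSucc j)))
      * M.δ ((Fin.snoc qs q' : Fin (i+2) → Q) (Fin.castSucc j).castSucc)
          ((Fin.snoc as a : Fin (i+1) → A) (Fin.castSucc j))
          ((Fin.snoc qs q' : Fin (i+2) → Q) (Fin.castSucc j).succ)
      = ∏ j : Fin i,
      (σ (List.ofFn (fun k : Fin j.val =>
          (qs ⟨k.val, by have := k.isLt; have := j.isLt; omega⟩,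
           as ⟨k.val, by have := k.isLt; have := j.isLt; omega⟩)))
          (qs j.castSucc) (as j))
        * M.δ (qs j.castSucc) (as j) (qs j.succ) :=
    Finset.prod_congr rfl (fun j _ => hinit j)
  rw [hprod]
  ring

end Paths

section Interface

variable (M : MDP Q A)

lemma Phi_succ (σ : List (Q × A) → Q → A → ℝ) (d0 : Q → ℝ) (i : ℕ) (g : Q → ℝ) :
    Phi M σ d0 (i+1) g = ∑ qs : Fin (i+1) → Q, ∑ as : Fin i → A,
      M.pathProb σ d0 i qs as *
        (∑ a, σ (H i qs as) (qs (Fin.last i)) a *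
          (∑ q', M.δ (qs (Fin.last i)) a q' * g q')) := by
  unfold Phi
  rw [sum_snoc (fun qs' => ∑ as' : Fin (i+1) → A,
    M.pathProb σ d0 (i+1) qs' as' * g (qs' (Fin.last (i+1))))]
  refine Finset.sum_congr rfl (fun qs _ => ?_)
  have hinner : ∀ q' : Q, ∑ as' : Fin (i+1) → A,
      M.pathProb σ d0 (i+1) (Fin.snoc qs q') as' * g ((Fin.snoc qs q' : Fin (i+2) → Q) (Fin.last (i+1)))
      = ∑ as : Fin i → A, ∑ a : A,
        M.pathProb σ d0 i qs as *
          (σ (H i qs as) (qs (Fin.last i)) a * M.δ (qs (Fin.last i)) a q') * g q' := by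
    intro q'
    rw [sum_snoc (fun as' => M.pathProb σ d0 (i+1) (Fin.snoc qs q') as'
      * g ((Fin.snoc qs q' : Fin (i+2) → Q) (Fin.last (i+1))))]
    refine Finset.sum_congr rfl (fun as _ => Finset.sum_congr rfl (fun a _ => ?_))
    rw [pathProb_snoc, Fin.snoc_last]
  rw [Finset.sum_congr rfl (fun q' _ => hinner q')]
  rw [Finset.sum_comm]
  refine Finset.sum_congr rfl (fun as _ => ?_)
  rw [Finset.sum_comm]
  rw [Finset.mul_sum]
  refine Finset.sum_congr rfl (fun a _ => ?_)
  rw [Finset.mul_sum, Finset.mul_sum]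
  refine Finset.sum_congr rfl (fun q' _ => ?_)
  ring

lemma Phi_step_le (σ : List (Q × A) → Q → A → ℝ) (hσ : MDP.IsStrategy σ)
    (d0 : Q → ℝ) (hd0 : ∀ q, 0 ≤ d0 q) (i : ℕ) (g : Q → ℝ) :
    Phi M σ d0 (i+1) g ≤ Phi M σ d0 i (F M g) := by
  rw [Phi_succ]
  unfold Phi
  refine Finset.sum_le_sum (fun qs _ => Finset.sum_le_sum (fun as _ => ?_))
  refine mul_le_mul_of_nonneg_left ?_ (pathProb_nonneg M σ d0 hσ.1 hd0 i qs as)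
  calc ∑ a, σ (H i qs as) (qs (Fin.last i)) a *
        (∑ q', M.δ (qs (Fin.last i)) a q' * g q')
      ≤ ∑ a, σ (H i qs as) (qs (Fin.last i)) a * F M g (qs (Fin.last i)) :=
        Finset.sum_le_sum (fun a _ => mul_le_mul_of_nonneg_left
          (le_F M g (qs (Fin.last i)) a) (hσ.1 _ _ _))
    _ = F M g (qs (Fin.last i)) := by rw [← Finset.sum_mul, hσ.2 _ _, one_mul]

lemma Phi_zero (σ : List (Q × A) → Q → A → ℝ) (d0 : Q → ℝ) (g : Q → ℝ) :
    Phi M σ d0 0 g = ∑ q, d0 q * g q := by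
  unfold Phi MDP.pathProb
  have h1 : ∀ qs : Fin 1 → Q, ∑ as : Fin 0 → A,
      (d0 (qs 0) * ∏ j : Fin 0,
        (σ (List.ofFn (fun k : Fin j.val =>
          (qs ⟨k.val, by have := k.isLt; have := j.isLt; omega⟩,
           as ⟨k.val, by have := k.isLt; have := j.isLt; omega⟩)))
          (qs j.castSucc) (as j))
        * M.δ (qs j.castSucc) (as j) (qs j.succ)) * g (qs (Fin.last 0))
      = d0 (qs 0) * g (qs 0) := by
    intro qs
    rw [Fintype.sum_unique]
    simp
  rw [Finset.sum_congr rfl (fun qs _ => h1 qs)]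
  exact Fintype.sum_bijective (Equiv.funUnique (Fin 1) Q)
    (Equiv.funUnique (Fin 1) Q).bijective _ _ (fun qs => rfl)

lemma Phi_le_iterate (σ : List (Q × A) → Q → A → ℝ) (hσ : MDP.IsStrategy σ)
    (d0 : Q → ℝ) (hd0 : ∀ q, 0 ≤ d0 q) :
    ∀ m g, Phi M σ d0 m g ≤ ∑ q, d0 q * ((F M)^[m] g) q := by
  intro m
  induction m with
  | zero =>
    intro g
    simp only [Function.iterate_zero_apply]
    rw [← Phi_zero M σ d0 g]
  | succ m ih =>
    intro g
    calc Phi M σ d0 (m+1) g ≤ Phi M σ d0 m (F M g) :=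
          Phi_step_le M σ hσ d0 hd0 m g
      _ ≤ ∑ q, d0 q * ((F M)^[m] (F M g)) q := ih (F M g)
      _ = ∑ q, d0 q * ((F M)^[m+1] g) q := by
          rw [← Function.iterate_succ_apply]

lemma mass_le_value (σ : List (Q × A) → Q → A → ℝ) (hσ : MDP.IsStrategy σ)
    (d0 : Q → ℝ) (hd0 : ∀ q, 0 ≤ d0 q) (T : Set Q) (i : ℕ) :
    MDP.mass (M.stepDist σ d0 i) T ≤ ∑ q, d0 q * v M T i q := by
  rw [mass_eq_Phi]
  exact Phi_le_iterate M σ hσ d0 hd0 i (ind T)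

noncomputable def best (T : Set Q) (j : ℕ) (q : Q) : A :=
  Classical.choose (exists_F_eq M (v M T j) q)

lemma best_spec (T : Set Q) (j : ℕ) (q : Q) :
    F M (v M T j) q = ∑ q', M.δ q (best M T j q) q' * v M T j q' :=
  Classical.choose_spec (exists_F_eq M (v M T j) q)

noncomputable def sigmaDet (T : Set Q) (i : ℕ) : List (Q × A) → Q → A → ℝ :=
  fun h q a => if a = best M T (i - h.length - 1) q then 1 else 0

lemma sigmaDet_strategy (T : Set Q) (i : ℕ) : MDP.IsStrategy (sigmaDet M T i) := by
  constructor
  · intro h q a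
    unfold sigmaDet
    split <;> norm_num
  · intro h q
    unfold sigmaDet
    rw [Finset.sum_ite_eq' Finset.univ (best M T (i - h.length - 1) q) (fun _ => (1:ℝ))]
    simp

lemma Phi_det_step (T : Set Q) (d0 : Q → ℝ) (i l : ℕ) (hl : l < i) :
    Phi M (sigmaDet M T i) d0 (l+1) (v M T (i - l - 1))
      = Phi M (sigmaDet M T i) d0 l (v M T (i - l)) := by
  rw [Phi_succ]
  unfold Phi
  refine Finset.sum_congr rfl (fun qs _ => Finset.sum_congr rfl (fun as _ => ?_))
  congr 1
  have hσval : ∀ a, sigmaDet M T i (H l qs as) (qs (Fin.last l)) a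
      = if a = best M T (i - l - 1) (qs (Fin.last l)) then 1 else 0 := by
    intro a
    unfold sigmaDet
    rw [H_length]
  rw [Finset.sum_congr rfl (fun a _ => by rw [hσval a])]
  have h2 : ∀ a : A, (if a = best M T (i - l - 1) (qs (Fin.last l)) then (1:ℝ) else 0) *
      (∑ q', M.δ (qs (Fin.last l)) a q' * v M T (i - l - 1) q')
      = if a = best M T (i - l - 1) (qs (Fin.last l)) then
          (∑ q', M.δ (qs (Fin.last l)) a q' * v M T (i - l - 1) q') else 0 := by
    intro a; split <;> simp
  rw [Finset.sum_congr rfl (fun a _ => h2 a)]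
  rw [Finset.sum_ite_eq' Finset.univ (best M T (i - l - 1) (qs (Fin.last l)))
    (fun a => ∑ q', M.δ (qs (Fin.last l)) a q' * v M T (i - l - 1) q')]
  rw [if_pos (Finset.mem_univ _)]
  rw [← best_spec M T (i - l - 1) (qs (Fin.last l))]
  rw [← v_succ M T (i - l - 1)]
  rw [show i - l - 1 + 1 = i - l by omega]

lemma Phi_det (T : Set Q) (d0 : Q → ℝ) (i : ℕ) :
    ∀ l, l ≤ i → Phi M (sigmaDet M T i) d0 l (v M T (i - l)) = ∑ q, d0 q * v M T i q := by
  intro l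
  induction l with
  | zero =>
    intro _
    rw [Phi_zero]
    simp
  | succ l ih =>
    intro hl
    have h1 : i - (l+1) = i - l - 1 := by omega
    rw [h1, Phi_det_step M T d0 i l (by omega)]
    exact ih (by omega)

lemma mass_det (T : Set Q) (d0 : Q → ℝ) (i : ℕ) :
    MDP.mass (M.stepDist (sigmaDet M T i) d0 i) T = ∑ q, d0 q * v M T i q := by
  rw [mass_eq_Phi]
  have := Phi_det M T d0 i i (le_refl i)
  rw [Nat.sub_self] at this
  exact this

end Interface

end Aux3

open MDP in
/-- If `d0` is not limit-sure eventually synchronizing in `T`, then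
`M^σ_i(T) ≤ 1 - ε_e` with `ε_e = α0 * α ^ ((n+1) * 2^n)` for all `σ, i`. -/
theorem stmt3 {Q A : Type} [Fintype Q] [Fintype A] (M : MDP Q A)
    (d0 : Q → ℝ) (hd0 : IsDist d0) (T : Set Q) (α α0 : ℝ)
    (hα : IsLeast {x : ℝ | 0 < x ∧ ∃ q a q', M.δ q a q' = x} α)
    (hα0 : IsLeast {x : ℝ | 0 < x ∧ ∃ q, d0 q = x} α0)
    (h : ¬ M.LimitSureEventually d0 T) :
    ∀ σ, IsStrategy σ → ∀ i : ℕ,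
      mass (M.stepDist σ d0 i) T ≤
        1 - α0 * α ^ ((Fintype.card Q + 1) * 2 ^ Fintype.card Q) := by
  intro σ hσ i
  by_contra hcon
  push_neg at hcon
  obtain ⟨⟨hα_pos, qw, aw, qw', hδw⟩, hα_lb⟩ := hα
  obtain ⟨⟨hα0_pos, q0w, hd0w⟩, hα0_lb⟩ := hα0
  haveI hQne : Nonempty Q := ⟨qw⟩
  haveI hAne : Nonempty A := ⟨aw⟩
  have hα_le1 : α ≤ 1 := by
    have h1 : M.δ qw aw qw' ≤ ∑ q', M.δ qw aw q' :=
      Finset.single_le_sum (fun q' _ => M.δ_nonneg qw aw q') (Finset.mem_univ qw')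
    rw [M.δ_sum, hδw] at h1
    exact h1
  have hδ_lb : ∀ q a q', 0 < M.δ q a q' → α ≤ M.δ q a q' :=
    fun q a q' hpos => hα_lb ⟨hpos, q, a, q', rfl⟩
  have hd0_lb : ∀ q, 0 < d0 q → α0 ≤ d0 q := fun q hpos => hα0_lb ⟨hpos, q, rfl⟩
  set n := Fintype.card Q with hn
  set K := (n + 1) * 2 ^ n with hK
  have hn1 : 1 ≤ n := Fintype.card_pos
  -- every state in the support of d0 has i-step value close to 1
  have hVi : ∀ q, 0 < d0 q → 1 - α ^ K < Aux3.v M T i q := by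
    intro q hq
    have hmass := Aux3.mass_le_value M σ hσ d0 hd0.1 T i
    have hterm : ∀ q' ∈ Finset.univ, d0 q' * Aux3.v M T i q'
        ≤ d0 q' - (if q' = q then d0 q * (1 - Aux3.v M T i q) else 0) := by
      intro q' _
      by_cases hqq : q' = q
      · subst hqq
        rw [if_pos rfl]
        have : d0 q' - d0 q' * (1 - Aux3.v M T i q') = d0 q' * Aux3.v M T i q' := by ring
        rw [this]
      · rw [if_neg hqq, sub_zero]
        calc d0 q' * Aux3.v M T i q' ≤ d0 q' * 1 :=
              mul_le_mul_of_nonneg_left (Aux3.v_le_one M T i q') (hd0.1 q')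
          _ = d0 q' := mul_one _
    have hsum : ∑ q', d0 q' * Aux3.v M T i q' ≤ 1 - d0 q * (1 - Aux3.v M T i q) := by
      calc ∑ q', d0 q' * Aux3.v M T i q'
          ≤ ∑ q', (d0 q' - (if q' = q then d0 q * (1 - Aux3.v M T i q) else 0)) :=
            Finset.sum_le_sum hterm
        _ = (∑ q', d0 q') - ∑ q', (if q' = q then d0 q * (1 - Aux3.v M T i q) else 0) := by
            rw [Finset.sum_sub_distrib]
        _ = 1 - d0 q * (1 - Aux3.v M T i q) := by
            rw [hd0.2, Finset.sum_ite_eq' Finset.univ q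
              (fun _ => d0 q * (1 - Aux3.v M T i q)), if_pos (Finset.mem_univ q)]
    have h2 : d0 q * (1 - Aux3.v M T i q) < α0 * α ^ K := by linarith
    have h3 : α0 * α ^ K ≤ d0 q * α ^ K :=
      mul_le_mul_of_nonneg_right (hd0_lb q hq) (pow_nonneg (le_of_lt hα_pos) K)
    have h4 : d0 q * (1 - Aux3.v M T i q) < d0 q * α ^ K := lt_of_lt_of_le h2 h3
    have h5 := (mul_lt_mul_iff_right₀ hq).mp h4
    linarith
  -- d0 is limit-sure eventually synchronizing: contradiction
  refine h ?_
  obtain ⟨k0, r, hr, hk0r, hper⟩ := Aux3.exists_period M T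
  rw [← hn] at hk0r
  haveI : NeZero r := ⟨by omega⟩
  have key : ∀ ε > (0:ℝ), ∃ j, ∀ q, 0 < d0 q → 1 - ε ≤ Aux3.v M T j q := by
    by_cases hi : i ≤ 2 ^ n
    · -- small horizon: sure synchronization
      intro ε hε
      refine ⟨i, fun q hq => ?_⟩
      have hKi : α ^ K ≤ α ^ i :=
        pow_le_pow_of_le_one (le_of_lt hα_pos) hα_le1 (by
          calc i ≤ 2 ^ n := hi
            _ ≤ (n + 1) * 2 ^ n := Nat.le_mul_of_pos_left _ (by omega))
      have hqR : q ∈ Aux3.R M T i := by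
        by_contra hnot
        have := Aux3.v_le_of_notMem_R M hα_pos hα_le1 hδ_lb T i q hnot
        have := hVi q hq
        linarith
      rw [Aux3.v_eq_one_of_mem_R M T i q hqR]
      linarith
    · push_neg at hi
      have hk0i : k0 ≤ i := by omega
      set c : ZMod r := ((i - k0 : ℕ) : ZMod r) with hc
      have hKk0 : n * r ≤ K - k0 := by
        refine Nat.le_sub_of_add_le ?_
        have e2 : k0 ≤ n * k0 := Nat.le_mul_of_pos_left _ (by omega)
        calc n * r + k0 ≤ n * r + n * k0 := Nat.add_le_add_left e2 _
          _ = n * (r + k0) := by ring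
          _ ≤ n * 2 ^ n := Nat.mul_le_mul_left n (by omega)
          _ ≤ K := by rw [hK]; exact Nat.mul_le_mul_right _ (by omega)
      have hstar : ∀ q, 0 < d0 q → Aux3.phistar M (Aux3.R M T k0) r q c = 1 := by
        intro q hq
        have hpeel := Aux3.peel M hα_pos hα_le1 hδ_lb T k0 (i - k0) q
        rw [show i - k0 + k0 = i by omega] at hpeel
        have h2 : 1 - Aux3.v M T i q < α ^ K := by have := hVi q hq; linarith
        have hk0K : k0 ≤ K := le_trans (by omega : k0 ≤ 2 ^ n)
          (by rw [hK]; exact Nat.le_mul_of_pos_left _ (by omega))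
        have h3 : 1 - Aux3.v M (Aux3.R M T k0) (i - k0) q < α ^ (K - k0) := by
          have hsplit : α ^ K = α ^ k0 * α ^ (K - k0) := by
            rw [← pow_add]
            congr 1
            omega
          have hp1 : 0 < α ^ k0 := pow_pos hα_pos k0
          nlinarith
        have h4 := Aux3.v_le_phi M (Aux3.R M T k0) r (i - k0) q
        have h5 := Aux3.phi_le_phistar M (Aux3.R M T k0) r (i - k0) q c
        have h6 : α ^ (K - k0) ≤ α ^ (n * r) :=
          pow_le_pow_of_le_one (le_of_lt hα_pos) hα_le1 hKk0
        by_contra hne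
        have hlt : Aux3.phistar M (Aux3.R M T k0) r q c < 1 :=
          lt_of_le_of_ne (Aux3.phistar_le_one M (Aux3.R M T k0) r q c) hne
        have hgap := Aux3.gap M (Aux3.R M T k0) r hα_pos hα_le1 hδ_lb (q, c) hlt
        simp only at hgap
        rw [← hn] at hgap
        linarith
      intro ε hε
      have hex' : ∀ q, ∃ m, (0 < d0 q → 1 - ε < Aux3.phi M (Aux3.R M T k0) r m q c) := by
        intro q
        by_cases hq : 0 < d0 q
        · by_contra hno
          push_neg at hno
          have hub : Aux3.phistar M (Aux3.R M T k0) r q c ≤ 1 - ε :=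
            Aux3.phistar_le M (Aux3.R M T k0) r q c (1 - ε) (fun m => (hno m).2)
          rw [hstar q hq] at hub
          linarith
        · exact ⟨0, fun hq' => absurd hq' hq⟩
      choose mf hmf using hex'
      set mmax := Finset.univ.sup mf with hmmax
      refine ⟨i + mmax * r, fun q hq => ?_⟩
      have hcast : ((i + mmax * r : ℕ) : ZMod r) = c + (k0 : ZMod r) := by
        have e1 : ((i + mmax * r : ℕ) : ZMod r) = (i : ZMod r) := by
          push_cast [ZMod.natCast_self]
          ring
        have e2 : c + (k0 : ZMod r) = ((i - k0 + k0 : ℕ) : ZMod r) := by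
          rw [hc, Nat.cast_add]
        rw [e1, e2, show i - k0 + k0 = i by omega]
      have hmr : mmax ≤ mmax * r := Nat.le_mul_of_pos_right _ (by omega)
      have hle : mmax + k0 ≤ i + mmax * r := by omega
      have h7 := Aux3.phi_le_v M T k0 r hr hper mmax c q (i + mmax * r) hcast hle
      have h8 : Aux3.phi M (Aux3.R M T k0) r (mf q) q c
          ≤ Aux3.phi M (Aux3.R M T k0) r mmax q c :=
        Aux3.phi_mono M (Aux3.R M T k0) r q c (Finset.le_sup (Finset.mem_univ q))
      have h9 := hmf q hq
      linarith
  intro ε hε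
  obtain ⟨j, hj⟩ := key ε hε
  refine ⟨Aux3.sigmaDet M T j, Aux3.sigmaDet_strategy M T j, j, ?_⟩
  rw [Aux3.mass_det M T d0 j]
  have hone : ∑ q, d0 q * (1 - ε) = 1 - ε := by
    rw [← Finset.sum_mul, hd0.2, one_mul]
  rw [← hone]
  refine Finset.sum_le_sum (fun q _ => ?_)
  rcases lt_or_eq_of_le (hd0.1 q) with hq | hq
  · exact mul_le_mul_of_nonneg_left (hj q hq) (le_of_lt hq)
  · rw [← hq, zero_mul, zero_mul]
end
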